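/- If the set of functions {(x, δ) ↦ f(x; θ + δ) : θ} is dense (in the topology of uniform convergence on compacta) in C(ℝ^{m+k}, ℝ^n), then for every pair of continuous functions c, b : ℝ^m → ℝ^n, every nonzero δ₀ ∈ ℝ^k, every compact K ⊆ ℝ^m, and every ε > 0, there exists θ such that sup_{x∈K} ‖f(x; θ) − c(x)‖ < ε and sup_{x∈K} ‖f(x; θ + δ₀) − b(x)‖ < ε. -/

import Mathlib

/-! Choose a continuous functional `t` with `t δ₀ = 1` and approximate the single continuous map
`g (x, δ) = c x + t δ • (b x - c x)` on the compact set `K × {0, δ₀}`: its slice at `δ = 0` is `c`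
and its slice at `δ = δ₀` is `b`. -/

theorem exists_continuous_slice_zero_eq_and_slice_eq {𝕜 X V W : Type*} [Field 𝕜]
    [TopologicalSpace 𝕜] [IsTopologicalRing 𝕜] [TopologicalSpace X]
    [AddCommGroup V] [TopologicalSpace V] [Module 𝕜 V] [SeparatingDual 𝕜 V]
    [AddCommGroup W] [TopologicalSpace W] [IsTopologicalAddGroup W] [Module 𝕜 W]
    [ContinuousSMul 𝕜 W] {c b : X → W} (hc : Continuous c) (hb : Continuous b)
    {v : V} (hv : v ≠ 0) :
    ∃ g : X × V → W, Continuous g ∧ (∀ x, g (x, 0) = c x) ∧ ∀ x, g (x, v) = b x := by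
  obtain ⟨t, ht⟩ := SeparatingDual.exists_eq_one (R := 𝕜) hv
  exact ⟨fun p ↦ c p.1 + t p.2 • (b p.1 - c p.1), by fun_prop, by simp, by simp [ht]⟩

/-- Universal approximation in parameter space implies existence of a dormant
trojan parameter `θ` (clean behavior `c` at `θ`, backdoor behavior `b` at
`θ + δ₀`). -/
theorem stmt_12 (m k n : ℕ)
    (f : (Fin m → ℝ) → (Fin k → ℝ) → (Fin n → ℝ))
    (hdense : ∀ g : (Fin m → ℝ) × (Fin k → ℝ) → (Fin n → ℝ), Continuous g →
      ∀ K' : Set ((Fin m → ℝ) × (Fin k → ℝ)), IsCompact K' → ∀ ε > (0 : ℝ),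
        ∃ θ : Fin k → ℝ, ∀ p ∈ K', ‖f p.1 (θ + p.2) - g p‖ < ε)
    (c b : (Fin m → ℝ) → (Fin n → ℝ)) (hc : Continuous c) (hb : Continuous b)
    (δ₀ : Fin k → ℝ) (hδ₀ : δ₀ ≠ 0)
    (K : Set (Fin m → ℝ)) (hK : IsCompact K)
    (ε : ℝ) (hε : 0 < ε) :
    ∃ θ : Fin k → ℝ, (∀ x ∈ K, ‖f x θ - c x‖ < ε) ∧
      (∀ x ∈ K, ‖f x (θ + δ₀) - b x‖ < ε) := by
  obtain ⟨g, hg, hg_zero, hg_δ₀⟩ :=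
    exists_continuous_slice_zero_eq_and_slice_eq (𝕜 := ℝ) hc hb hδ₀
  have hK' : IsCompact (K ×ˢ ({0, δ₀} : Set (Fin k → ℝ))) :=
    hK.prod ((Set.finite_singleton δ₀).insert 0).isCompact
  obtain ⟨θ, hθ⟩ := hdense g hg _ hK' ε hε
  refine ⟨θ, fun x hx ↦ ?_, fun x hx ↦ ?_⟩
  · simpa [hg_zero] using hθ (x, 0) ⟨hx, .inl rfl⟩
  · simpa [hg_δ₀] using hθ (x, δ₀) ⟨hx, .inr rfl⟩
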